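/- In the canonical system associated with 𝒜_C, every negative trajectory value strictly increases under one iteration: for every i ∈ ℕ and every integer n < 0, one has f_i(n) > n. Consequently, the trajectory of any negative integer eventually becomes nonnegative. -/
import Mathlib


/-- The bases of the canonical collection `𝒜_C`: `b_i = 4^(i+1)`. -/
def bC (i : ℕ) : ℤ := 4 ^ (i + 1)

/-- The modified Collatz map: `g 0 = 0`, `g 1 = 0`, `g j = j/2` for even `j`,
and `g j = 3j + 1` for odd `j > 1`. -/
def gC (j : ℤ) : ℤ := if j = 1 then 0 else if 2 ∣ j then j / 2 else 3 * j + 1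

/-- The canonical system maps of `𝒜_C`: `f_i(n) = (n - t_i(n)) / b_i`, where
`t_i(n) = r - b_i · g(r)` with `r = n mod b_i ∈ [0, b_i)` is the unique element of
`T_i` congruent to `n` modulo `b_i`. -/
def fC (i : ℕ) (n : ℤ) : ℤ := (n - Int.emod n (bC i)) / bC i + gC (Int.emod n (bC i))

/-- The trajectory of `n` in the canonical system of `𝒜_C`:
`n_0 = n`, `n_{i+1} = f_i(n_i)`. -/
def trajC (n : ℤ) : ℕ → ℤ
  | 0 => n
  | i + 1 => fC i (trajC n i)

lemma gC_bound (b r : ℤ) (hb : 4 ≤ b) (hr0 : 0 ≤ r) (hrb : r < b) :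
    2 * r - 2 * (b - 1) < 2 * gC r := by
  unfold gC
  split_ifs with h1 h2
  · omega
  · omega
  · omega

lemma fC_lt (i : ℕ) (n : ℤ) (hn : n < 0) : n < fC i n := by
  have hb4 : (4:ℤ) ≤ bC i := by
    have : (4:ℤ)^1 ≤ 4^(i+1) := pow_le_pow_right₀ (by norm_num) (by omega)
    simpa [bC] using this
  have hb0 : (0:ℤ) < bC i := by omega
  have hr0 : 0 ≤ Int.emod n (bC i) := Int.emod_nonneg n (by omega)
  have hrb : Int.emod n (bC i) < bC i := Int.emod_lt_of_pos n hb0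
  have hde : bC i * (n / bC i) + Int.emod n (bC i) = n := Int.mul_ediv_add_emod n (bC i)
  have hqeq : (n - Int.emod n (bC i)) / bC i = n / bC i := by
    have h1 : n - Int.emod n (bC i) = bC i * (n / bC i) := by omega
    rw [h1, Int.mul_ediv_cancel_left _ (by omega)]
  set b := bC i
  set r := Int.emod n b with hrdef
  set q := n / b with hqdef
  have hn' : n = b * q + r := by omega
  have hq : q ≤ -1 := by nlinarith
  have key : q * (b - 1) ≤ -1 * (b - 1) := mul_le_mul_of_nonneg_right hq (by omega)
  have hg := gC_bound b r hb4 hr0 hrb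
  show n < (n - r) / b + gC r
  rw [hqeq]
  nlinarith

lemma traj_lb (n : ℤ) : ∀ i : ℕ, (∀ j < i, trajC n j < 0) → n + i ≤ trajC n i := by
  intro i
  induction i with
  | zero => intro _; simp [trajC]
  | succ k ih =>
    intro h
    have hk : trajC n k < 0 := h k (by omega)
    have h1 := ih (fun j hj => h j (by omega))
    have h2 : trajC n k < fC k (trajC n k) := fC_lt k _ hk
    have h3 : trajC n (k+1) = fC k (trajC n k) := rfl
    push_cast
    omega

/-- In the canonical system of `𝒜_C`, every negative value strictly increases under one
iteration; consequently the trajectory of any negative integer eventually becomes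
nonnegative. -/
theorem fC_negative_increases :
    (∀ (i : ℕ) (n : ℤ), n < 0 → n < fC i n) ∧
    (∀ n : ℤ, n < 0 → ∃ i : ℕ, 0 ≤ trajC n i) := by
  refine ⟨fun i n hn => fC_lt i n hn, fun n hn => ?_⟩
  by_contra h
  push_neg at h
  have h1 := traj_lb n n.natAbs (fun j _ => h j)
  have h2 := h n.natAbs
  omega
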